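/- arXiv:1711.06331 — 3 statements merged into one kernel-verified Lean document; each statement's English description precedes it below -/
import Mathlib

section
/- Let C be a category with limits, X : ℤ → C a functor with X(k) = 0 (a zero object) for all k > n-1, i.e. X ∈ D(ℤ)(≤ n-1) (pointed setting). Then the unit X → [≤ n]_* ([≤ n]^* X) of the right Kan extension adjunction along ℤ_{≤n} → ℤ is an isomorphism. -/
open CategoryTheory CategoryTheory.Limits

/-- The poset `ℤ_{≤ n}`, with the convention that there is a unique morphism `i ⟶ k`
exactly when `k ≤ i` (i.e. the dual order). -/
def Zle (n : ℤ) : Type := {i : ℤ // i ≤ n}ᵒᵈ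

noncomputable instance (n : ℤ) : Preorder (Zle n) := by unfold Zle; infer_instance

/-- The fully faithful inclusion `[≤ n] : ℤ_{≤ n} ⥤ ℤ`. -/
noncomputable def incLe (n : ℤ) : Zle n ⥤ ℤᵒᵈ :=
  Monotone.functor (f := fun i => OrderDual.toDual (OrderDual.ofDual i).val)
    (Monotone.dual (f := fun i : {i : ℤ // i ≤ n} => (i : ℤ)) (fun _ _ h => h))

/-!
At `j ≤ n` the unit is an isomorphism for any `X`, since `[≤ n]` is fully faithful: the counit of
`[≤ n]^* ⊣ [≤ n]_*` is then invertible and the triangle identity makes the unit its inverse at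
`j`. At `j > n` the comma category `j ↓ [≤ n]` has initial object `n`, so
`([≤ n]_* [≤ n]^* X)(j) ≅ X(n) = 0`, while `X(j) = 0` as well.
-/

namespace CategoryTheory.Functor

variable {C D H : Type*} [Category C] [Category D] [Category H] (L : C ⥤ D)
  [∀ F : C ⥤ H, L.HasPointwiseRightKanExtension F]

lemma isIso_ranAdjunction_unit_app_app_obj [L.Full] [L.Faithful] (G : D ⥤ H) (c : C) :
    IsIso (((L.ranAdjunction H).unit.app G).app (L.obj c)) := by
  rw [IsIso.eq_inv_of_inv_hom_id (L.ranCounit_app_app_ranAdjunction_unit_app_app G c)]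
  infer_instance

noncomputable def ranObjObjIsoOfIsInitial (F : C ⥤ H) {d : D} {i : StructuredArrow d L}
    (hi : IsInitial i) : (L.ran.obj F).obj d ≅ F.obj i.right :=
  L.ranObjObjIsoLimit F d ≪≫ (limit.isLimit _).conePointUniqueUpToIso (limitOfDiagramInitial hi _)

end CategoryTheory.Functor

instance (n : ℤ) : (incLe n).Faithful where
  map_injective _ := Subsingleton.elim _ _

instance (n : ℤ) : (incLe n).Full where
  map_surjective f := ⟨homOfLE (leOfHom f), rfl⟩

def Zle.top (n : ℤ) : Zle n := OrderDual.toDual ⟨n, le_rfl⟩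

noncomputable def incLe.isInitialStructuredArrowTop {n : ℤ} (j : ℤᵒᵈ)
    (hj : n ≤ OrderDual.ofDual j) :
    IsInitial (StructuredArrow.mk (Y := Zle.top n) (homOfLE hj) : StructuredArrow j (incLe n)) :=
  IsInitial.ofUniqueHom
    (fun i => StructuredArrow.homMk (homOfLE (OrderDual.ofDual i.right).2) (Subsingleton.elim _ _))
    (fun _ _ => StructuredArrow.hom_ext _ _ (Subsingleton.elim _ _))

theorem stmt10_general {C : Type*} [Category C] [HasLimitsOfSize.{0, 0} C]
    (n : ℤ) (X : ℤᵒᵈ ⥤ C)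
    (hX : ∀ k : ℤ, n - 1 < k → IsZero (X.obj (OrderDual.toDual k))) :
    IsIso (((incLe n).ranAdjunction C).unit.app X) := by
  rw [NatTrans.isIso_iff_isIso_app]
  intro j
  by_cases hj : OrderDual.ofDual j ≤ n
  · exact (incLe n).isIso_ranAdjunction_unit_app_app_obj X (OrderDual.toDual ⟨_, hj⟩)
  · have hXj : IsZero (X.obj j) := hX (OrderDual.ofDual j) (by omega)
    have hRj : IsZero (((incLe n).ran.obj (incLe n ⋙ X)).obj j) :=
      (hX n (by omega)).of_iso
        ((incLe n).ranObjObjIsoOfIsInitial _ (incLe.isInitialStructuredArrowTop j (by omega)))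
    exact hXj.isIso hRj _

/-- if `X : ℤ ⥤ C` satisfies `X k = 0` for all `k > n - 1` (i.e. `k ≥ n`),
then the unit `X ⟶ [≤ n]_* ([≤ n]^* X)` of the (pointwise) right Kan extension adjunction
along `ℤ_{≤ n} ⥤ ℤ` is an isomorphism. -/
theorem stmt10 {C : Type*} [Category C] [HasLimitsOfSize.{0, 0} C] [HasZeroObject C]
    (n : ℤ) (X : ℤᵒᵈ ⥤ C)
    (hX : ∀ k : ℤ, n - 1 < k → IsZero (X.obj (OrderDual.toDual k))) :
    IsIso (((incLe n).ranAdjunction C).unit.app X) :=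
  stmt10_general n X hX
end

section
/- Let T be a triangulated category and (S, U) a pair of full triangulated subcategories such that the inclusion S → T admits a right adjoint r, the inclusion U → T admits a left adjoint l, and S = Ker l. Then for every X ∈ T there is a distinguished triangle r'(X) → X → l'(X) → Σ r'(X), where r' = (inclusion)∘r and l' = (inclusion)∘l, with r'(X) ∈ S and l'(X) ∈ U; i.e., (S, U) forms a stable t-structure. -/
open CategoryTheory CategoryTheory.Limits CategoryTheory.Pretriangulated

namespace CategoryTheory.Triangulated

/-- The former Mathlib structure `Triangulated.Subcategory` (removed upstream), restored
with its old definition. -/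
structure Subcategory (C : Type*) [Category C] [HasZeroObject C] [HasShift C ℤ]
    [Preadditive C] [∀ n : ℤ, (shiftFunctor C n).Additive] [Pretriangulated C] where
  P : C → Prop
  zero' : ∃ (Z : C) (_ : IsZero Z), P Z
  shift (X : C) (n : ℤ) : P X → P (X⟦n⟧)
  ext₂' (T : Triangle C) (_ : T ∈ distTriang C) : P T.obj₁ → P T.obj₃ →
    ObjectProperty.isoClosure P T.obj₂

end CategoryTheory.Triangulated

/-!
Complete the unit `X ⟶ l X` to a distinguished triangle `B ⟶ X ⟶ l X ⟶ B⟦1⟧`. As `l X` is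
the reflection of `X` into `U` and `U` is stable under shifts, the long exact `Hom(-, U)`
sequence gives `Hom(B, U) = 0`, i.e. `l B = 0`, so `B ∈ S = Ker l`. The same equality
`S = Ker l` gives `Hom(S, U) = 0`, so by the long exact `Hom(S, -)` sequence every morphism
from an object of `S` to `X` factors uniquely through `B ⟶ X`. Thus `B ⟶ X` and the counit
`r X ⟶ X` are both coreflections of `X` into `S`, hence isomorphic over `X`, and the triangle
can be transported along this isomorphism.
-/

namespace CategoryTheory

section FullSubcategory

variable {C : Type*} [Category C] {P : ObjectProperty C}

theorem Adjunction.bijective_unit_comp {L : C ⥤ P.FullSubcategory} (adj : L ⊣ P.ι) (X : C)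
    {Z : C} (hZ : P Z) :
    Function.Bijective (fun f : P.ι.obj (L.obj X) ⟶ Z => adj.unit.app X ≫ f) :=
  (adj.homEquiv X ⟨Z, hZ⟩).bijective.comp InducedCategory.homEquiv.symm.bijective

theorem Adjunction.bijective_comp_counit {R : C ⥤ P.FullSubcategory} (adj : P.ι ⊣ R) (X : C)
    {W : C} (hW : P W) :
    Function.Bijective (fun f : W ⟶ P.ι.obj (R.obj X) => f ≫ adj.counit.app X) :=
  (adj.homEquiv ⟨W, hW⟩ X).symm.bijective.comp InducedCategory.homEquiv.symm.bijective

theorem Adjunction.isZero_iff_forall_hom_eq_zero [HasZeroMorphisms C]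
    {L : C ⥤ P.FullSubcategory} (adj : L ⊣ P.ι) (A : C) :
    IsZero (P.ι.obj (L.obj A)) ↔ ∀ Z, P Z → ∀ f : A ⟶ Z, f = 0 := by
  constructor
  · intro hA Z hZ f
    obtain ⟨g, rfl⟩ := (adj.bijective_unit_comp A hZ).2 f
    simp only [hA.eq_of_src g 0, comp_zero]
  · intro h
    rw [IsZero.iff_id_eq_zero]
    apply (adj.bijective_unit_comp A (L.obj A).2).1
    simpa using h _ (L.obj A).2 (adj.unit.app A)

theorem ObjectProperty.exists_iso_comp_eq {Q : ObjectProperty C} {B B' X : C}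
    (hB : Q B) (hB' : Q B') (b : B ⟶ X) (b' : B' ⟶ X)
    (hb : ∀ W, Q W → Function.Bijective (fun s : W ⟶ B => s ≫ b))
    (hb' : ∀ W, Q W → Function.Bijective (fun s : W ⟶ B' => s ≫ b')) :
    ∃ e : B ≅ B', e.hom ≫ b' = b := by
  obtain ⟨φ, hφ⟩ := (hb' B hB).2 b
  obtain ⟨ψ, hψ⟩ := (hb B' hB').2 b'
  simp only at hφ hψ
  refine ⟨⟨φ, ψ, (hb B hB).1 ?_, (hb' B' hB').1 ?_⟩, hφ⟩
  · simp only [Category.assoc, hψ, hφ, Category.id_comp]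
  · simp only [Category.assoc, hφ, hψ, Category.id_comp]

end FullSubcategory

namespace Pretriangulated

variable {C : Type*} [Category C] [Preadditive C] [HasZeroObject C] [HasShift C ℤ]
  [∀ n : ℤ, (shiftFunctor C n).Additive] [Pretriangulated C]

theorem bijective_comp_mor₁_of_distTriang (T : Triangle C) (hT : T ∈ distTriang C) {W : C}
    (h₃ : ∀ f : W ⟶ T.obj₃, f = 0) (h₃' : ∀ f : W ⟶ T.obj₃⟦(-1 : ℤ)⟧, f = 0) :
    Function.Bijective (fun s : W ⟶ T.obj₁ => s ≫ T.mor₁) := by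
  refine ⟨fun s s' h => ?_, fun t => ?_⟩
  · obtain ⟨u, hu⟩ := Triangle.coyoneda_exact₂ _ (inv_rot_of_distTriang _ hT) (s - s')
      (show (s - s') ≫ T.mor₁ = 0 by rw [Preadditive.sub_comp, sub_eq_zero]; exact h)
    rw [h₃' u] at hu
    exact sub_eq_zero.1 (hu.trans zero_comp)
  · obtain ⟨s, rfl⟩ := Triangle.coyoneda_exact₂ _ hT t (h₃ _)
    exact ⟨s, rfl⟩

theorem hom_obj₁_eq_zero_of_distTriang (T : Triangle C) (hT : T ∈ distTriang C) {Z : C}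
    (hsurj : Function.Surjective (fun g : T.obj₃ ⟶ Z => T.mor₂ ≫ g))
    (hinj : Function.Injective (fun f : T.obj₃ ⟶ Z⟦(1 : ℤ)⟧ => T.mor₂ ≫ f))
    (g : T.obj₁ ⟶ Z) : g = 0 := by
  have hw : T.mor₃ ≫ g⟦(1 : ℤ)⟧' = 0 :=
    hinj (by simp only [comp_distTriang_mor_zero₂₃_assoc _ hT, zero_comp, comp_zero])
  obtain ⟨h, hh⟩ := Triangle.yoneda_exact₃ _ (rot_of_distTriang _ hT) _ hw
  dsimp only [Triangle.rotate, Triangle.mk] at h hh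
  obtain ⟨k, hk⟩ := hsurj ((shiftFunctor C (1 : ℤ)).preimage h)
  have hbh : T.mor₁ ≫ (shiftFunctor C (1 : ℤ)).preimage h = 0 := by
    simp only [← hk, comp_distTriang_mor_zero₁₂_assoc _ hT, zero_comp]
  apply (shiftFunctor C (1 : ℤ)).map_injective
  rw [hh, Functor.map_zero, Preadditive.neg_comp, ← (shiftFunctor C (1 : ℤ)).map_preimage h,
    ← Functor.map_comp, hbh, Functor.map_zero, neg_zero]

theorem distinguished_mk_of_iso_obj₁ {B B' X Y : C} {b : B ⟶ X} {c : X ⟶ Y}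
    {w : Y ⟶ B⟦(1 : ℤ)⟧} (hT : Triangle.mk b c w ∈ distTriang C) (e : B ≅ B') (b' : B' ⟶ X)
    (he : e.hom ≫ b' = b) : Triangle.mk b' c (w ≫ e.hom⟦(1 : ℤ)⟧') ∈ distTriang C :=
  isomorphic_distinguished _ hT _ <| Triangle.isoMk _ _ e.symm (Iso.refl X) (Iso.refl Y)
    (by dsimp [Triangle.mk]; simp [← he]) (by dsimp [Triangle.mk]; simp)
    (by dsimp [Triangle.mk]; simp [← Functor.map_comp])

end Pretriangulated

end CategoryTheory

/-- given full triangulated subcategories `S`, `U` of a triangulated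
category `T` such that the inclusion of `S` has a right adjoint `r`, the inclusion of `U`
has a left adjoint `l`, and `S = Ker l`, every `X : T` fits into a distinguished triangle
`r'(X) ⟶ X ⟶ l'(X) ⟶ Σ r'(X)` whose first map is the counit and second map is the unit;
i.e. `(S, U)` is a stable t-structure. -/
theorem stmt12 {T : Type*} [Category T] [Preadditive T] [HasZeroObject T] [HasShift T ℤ]
    [∀ n : ℤ, (shiftFunctor T n).Additive] [Pretriangulated T] [IsTriangulated T]
    (S U : Triangulated.Subcategory T)
    (r : T ⥤ ObjectProperty.FullSubcategory S.P) (adj_r : ObjectProperty.ι S.P ⊣ r)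
    (l : T ⥤ ObjectProperty.FullSubcategory U.P) (adj_l : l ⊣ ObjectProperty.ι U.P)
    (hker : ∀ X : T, S.P X ↔ IsZero ((ObjectProperty.ι U.P).obj (l.obj X))) :
    ∀ X : T, ∃ h : (ObjectProperty.ι U.P).obj (l.obj X) ⟶
        ((ObjectProperty.ι S.P).obj (r.obj X))⟦(1 : ℤ)⟧,
      Triangle.mk (adj_r.counit.app X) (adj_l.unit.app X) h ∈ distTriang T := by
  intro X
  obtain ⟨B, b, w, hT⟩ := distinguished_cocone_triangle₁ (adj_l.unit.app X)
  have hSU : ∀ A, S.P A → ∀ Z, U.P Z → ∀ f : A ⟶ Z, f = 0 := fun A hA =>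
    (adj_l.isZero_iff_forall_hom_eq_zero A).1 ((hker A).1 hA)
  have hB : S.P B := (hker B).2 <| (adj_l.isZero_iff_forall_hom_eq_zero B).2 fun Z hZ =>
    hom_obj₁_eq_zero_of_distTriang _ hT (adj_l.bijective_unit_comp X hZ).2
      (adj_l.bijective_unit_comp X (U.shift Z 1 hZ)).1
  have hb : ∀ W, S.P W → Function.Bijective (fun s : W ⟶ B => s ≫ b) := fun W hW =>
    bijective_comp_mor₁_of_distTriang _ hT (hSU W hW _ (l.obj X).2)
      (hSU W hW _ (U.shift _ (-1) (l.obj X).2))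
  obtain ⟨e, he⟩ := ObjectProperty.exists_iso_comp_eq (Q := S.P) hB (r.obj X).2 b _ hb
    fun W hW => adj_r.bijective_comp_counit X hW
  exact ⟨_, distinguished_mk_of_iso_obj₁ hT e _ he⟩
end

section
/- Let C be an additive category and let X, Y : ℤ → C be functors such that Y(k) = 0 for all k > 0 and the structure map X(k) → X(k-1) is an isomorphism for all k ≤ 1 (with ℤ having morphisms k → j for j ≤ k). Let s = [-1]^* denote precomposition with k ↦ k-1, and α : id ⇒ s the transformation induced by the canonical φ : id_ℤ ⇒ [-1]. Then the map Nat(s(Y), X) → Nat(Y, X), g ↦ g ∘ α(Y), is bijective. -/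
/-!
Naturality of `g : s(Y) ⟶ X` along `φ_k : k ⟶ k - 1` says `g_k ≫ x_k = (g ∘ α(Y))_{k-1}`.
For `k ≤ 1` the structure map `x_k` is invertible, so `g_k` is recovered from `g ∘ α(Y)`; for
`k > 1` the source `Y(k-1)` of `g_k` is zero. The same recipe, `f ↦ (f_{k-1} ≫ x_k⁻¹)_k`,
defines the inverse map.
-/

open CategoryTheory CategoryTheory.Limits

/-- The translation functor `[-1] : ℤ → ℤ`, `k ↦ k - 1`, on the poset `ℤ` viewed as a
category with a unique morphism `k ⟶ j` exactly when `j ≤ k` (i.e. `ℤᵒᵈ`). -/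
noncomputable def shiftFun : ℤᵒᵈ ⥤ ℤᵒᵈ :=
  Monotone.functor (f := fun k => OrderDual.toDual (OrderDual.ofDual k - 1))
    (Monotone.dual (f := fun x : ℤ => x - 1) (fun _ _ h => sub_le_sub_right h 1))

/-- The canonical natural transformation `φ : id ⇒ [-1]`. -/
noncomputable def phi : 𝟭 ℤᵒᵈ ⟶ shiftFun where
  app k := homOfLE (show OrderDual.ofDual k - 1 ≤ OrderDual.ofDual k from
    sub_le_self _ zero_le_one)
  naturality _ _ _ := Subsingleton.elim _ _

/-- The structure map `x_k : X k ⟶ X (k-1)` of a functor `X : ℤ ⥤ C`. -/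
noncomputable def structMap {C : Type*} [Category C] (X : ℤᵒᵈ ⥤ C) (k : ℤ) :
    X.obj (OrderDual.toDual k) ⟶ X.obj (OrderDual.toDual (k - 1)) :=
  X.map (homOfLE (OrderDual.toDual_le_toDual.mpr (sub_le_self k zero_le_one)))

section

variable {C : Type*} [Category C]

lemma map_phi_app_naturality (X : ℤᵒᵈ ⥤ C) {a b : ℤᵒᵈ} (u : a ⟶ b) :
    X.map (phi.app a) ≫ X.map (shiftFun.map u) = X.map u ≫ X.map (phi.app b) := by
  simp only [← X.map_comp]
  exact congrArg X.map (Subsingleton.elim _ _)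

variable {X Y : ℤᵒᵈ ⥤ C}

lemma precomp_alpha_app (g : shiftFun ⋙ Y ⟶ X) (k : ℤᵒᵈ) :
    (Y.leftUnitor.inv ≫ Functor.whiskerRight phi Y ≫ g).app k = Y.map (phi.app k) ≫ g.app k := by
  simp

lemma app_comp_map_phi_app (g : shiftFun ⋙ Y ⟶ X) (k : ℤᵒᵈ) :
    g.app k ≫ X.map (phi.app k) = Y.map (phi.app (shiftFun.obj k)) ≫ g.app (shiftFun.obj k) := by
  have hφ : shiftFun.map (phi.app k) = phi.app (shiftFun.obj k) := Subsingleton.elim _ _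
  simpa [hφ] using (g.naturality (phi.app k)).symm

variable (hY : ∀ k : ℤ, 0 < k → IsZero (Y.obj (OrderDual.toDual k)))
  (hX : ∀ k : ℤ, k ≤ 1 → IsIso (structMap X k))

include hX in
lemma isIso_map_phi_app {k : ℤᵒᵈ} (hk : OrderDual.ofDual k ≤ 1) : IsIso (X.map (phi.app k)) :=
  hX _ hk

include hY in
lemma isZero_obj_shiftFun {k : ℤᵒᵈ} (hk : ¬OrderDual.ofDual k ≤ 1) :
    IsZero ((shiftFun ⋙ Y).obj k) :=
  hY (OrderDual.ofDual k - 1) (by omega)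

include hY hX

noncomputable def liftAlongAlpha (f : Y ⟶ X) : shiftFun ⋙ Y ⟶ X where
  app k :=
    if h : OrderDual.ofDual k ≤ 1 then
      f.app (shiftFun.obj k) ≫ inv (I := isIso_map_phi_app hX h) (X.map (phi.app k))
    else (isZero_obj_shiftFun hY h).to_ _
  naturality a b u := by
    by_cases ha : OrderDual.ofDual a ≤ 1
    · have hba : OrderDual.ofDual b ≤ OrderDual.ofDual a := leOfHom u
      have := isIso_map_phi_app hX ha
      have := isIso_map_phi_app hX (hba.trans ha)
      rw [dif_pos ha, dif_pos (hba.trans ha), Functor.comp_map, ← Category.assoc, f.naturality,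
        Category.assoc, Category.assoc]
      congr 1
      rw [IsIso.comp_inv_eq, Category.assoc, IsIso.eq_inv_comp]
      exact map_phi_app_naturality X u
    · exact (isZero_obj_shiftFun hY ha).eq_of_src _ _

lemma liftAlongAlpha_precomp_alpha (g : shiftFun ⋙ Y ⟶ X) :
    liftAlongAlpha hY hX (Y.leftUnitor.inv ≫ Functor.whiskerRight phi Y ≫ g) = g := by
  ext k
  by_cases hk : OrderDual.ofDual k ≤ 1
  · have := isIso_map_phi_app hX hk
    simp only [liftAlongAlpha, dif_pos hk, precomp_alpha_app, ← app_comp_map_phi_app,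
      Category.assoc, IsIso.hom_inv_id, Category.comp_id]
  · exact (isZero_obj_shiftFun hY hk).eq_of_src _ _

lemma precomp_alpha_liftAlongAlpha (f : Y ⟶ X) :
    Y.leftUnitor.inv ≫ Functor.whiskerRight phi Y ≫ liftAlongAlpha hY hX f = f := by
  ext k
  rw [precomp_alpha_app]
  by_cases hk : OrderDual.ofDual k ≤ 1
  · have := isIso_map_phi_app hX hk
    simp only [liftAlongAlpha, dif_pos hk]
    rw [← Category.assoc, f.naturality, Category.assoc, IsIso.hom_inv_id, Category.comp_id]
    rfl
  · exact (hY (OrderDual.ofDual k) (by omega)).eq_of_src _ _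

end

theorem stmt17_general {C : Type*} [Category C]
    (X Y : ℤᵒᵈ ⥤ C)
    (hY : ∀ k : ℤ, 0 < k → IsZero (Y.obj (OrderDual.toDual k)))
    (hX : ∀ k : ℤ, k ≤ 1 → IsIso (structMap X k)) :
    Function.Bijective
      (fun g : (shiftFun ⋙ Y) ⟶ X => Y.leftUnitor.inv ≫ Functor.whiskerRight phi Y ≫ g) :=
  Function.bijective_iff_has_inverse.mpr ⟨liftAlongAlpha hY hX,
    liftAlongAlpha_precomp_alpha hY hX, precomp_alpha_liftAlongAlpha hY hX⟩

/-- axiom (F6) in functor categories: let `C` be an additive category and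
`X Y : ℤ ⥤ C` with `Y k = 0` for `k > 0` and with the structure maps `X k ⟶ X (k-1)`
isomorphisms for `k ≤ 1`.  With `s(Y) = [-1]^* Y = shiftFun ⋙ Y` and
`α(Y) = φ ▷ Y : Y ⟶ s(Y)`, the map `Nat(s(Y), X) → Nat(Y, X)`, `g ↦ g ∘ α(Y)`,
is bijective. -/
theorem stmt17 {C : Type*} [Category C] [Preadditive C] [HasZeroObject C]
    (X Y : ℤᵒᵈ ⥤ C)
    (hY : ∀ k : ℤ, 0 < k → IsZero (Y.obj (OrderDual.toDual k)))
    (hX : ∀ k : ℤ, k ≤ 1 → IsIso (structMap X k)) :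
    Function.Bijective
      (fun g : (shiftFun ⋙ Y) ⟶ X => Y.leftUnitor.inv ≫ Functor.whiskerRight phi Y ≫ g) :=
  stmt17_general X Y hY hX
end
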